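/- arXiv:1410.7471 — 3 statements merged into one kernel-verified Lean document; each statement's English description precedes it below -/
import Mathlib

section
/- If KS_A is the most permissive controller of a contract automaton A, then L(KS_A) = 𝔷 ∩ L(A), where 𝔷 is the set of strong agreements. -/
namespace CAut

/-- A context of labels: requests, offers, a distinguished idle label, and an
involution swapping requests and offers and fixing the idle label. -/
structure LabelCtx (L : Type) where
  req : Set L
  off : Set L
  idle : L
  req_off_disj : ∀ a : L, ¬ (a ∈ req ∧ a ∈ off)
  idle_not_req : idle ∉ req
  idle_not_off : idle ∉ off
  bar : L → L
  bar_req : ∀ a ∈ req, bar a ∈ off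
  bar_off : ∀ a ∈ off, bar a ∈ req
  bar_bar : ∀ a ∈ req ∪ off, bar (bar a) = a
  bar_idle : bar idle = idle

variable {L Q : Type} {n : ℕ}

/-- A word consisting only of idle labels (□*). -/
def IdleWord (C : LabelCtx L) (w : List L) : Prop := ∀ x ∈ w, x = C.idle

/-- `w` is a request action on `b`: it has the form □* b □* with b ∈ 𝕣. -/
def IsRequestOn (C : LabelCtx L) (w : List L) (b : L) : Prop :=
  b ∈ C.req ∧ ∃ u v : List L, IdleWord C u ∧ IdleWord C v ∧ w = u ++ b :: v

/-- `w` is an offer action on `b`: it has the form □* b □* with b ∈ 𝕠. -/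
def IsOfferOn (C : LabelCtx L) (w : List L) (b : L) : Prop :=
  b ∈ C.off ∧ ∃ u v : List L, IdleWord C u ∧ IdleWord C v ∧ w = u ++ b :: v

/-- `w` is a match action on `b`: it has the form □* b □* b̄ □* with b ∈ 𝕣 ∪ 𝕠. -/
def IsMatchOn (C : LabelCtx L) (w : List L) (b : L) : Prop :=
  b ∈ C.req ∪ C.off ∧
    ∃ u v z : List L, IdleWord C u ∧ IdleWord C v ∧ IdleWord C z ∧
      w = u ++ b :: (v ++ C.bar b :: z)

/-- An action is a request, offer, or match action (on some `b`). -/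
def IsAction (C : LabelCtx L) (w : List L) : Prop :=
  ∃ b : L, IsRequestOn C w b ∨ IsOfferOn C w b ∨ IsMatchOn C w b

def IsMatch (C : LabelCtx L) (w : List L) : Prop := ∃ b : L, IsMatchOn C w b

/-- The relation ⋈̇ : both are actions of the same length, offers on `b` must face
requests on `b` and vice versa. -/
def BowtieDot (C : LabelCtx L) (u v : List L) : Prop :=
  IsAction C u ∧ IsAction C v ∧ u.length = v.length ∧
    (∀ b : L, IsOfferOn C u b → IsRequestOn C v b) ∧
    (∀ b : L, IsRequestOn C u b → IsOfferOn C v b)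

/-- ⋈ is the symmetric closure of ⋈̇. -/
def Bowtie (C : LabelCtx L) (u v : List L) : Prop :=
  BowtieDot C u v ∨ BowtieDot C v u

/-- A contract automaton of rank `n` (transition structure; the well-formedness
conditions are in `CAWF`). -/
structure CA (L Q : Type) (n : ℕ) where
  init : Fin n → Q
  trans : Set ((Fin n → Q) × (Fin n → L) × (Fin n → Q))
  acc : Set (Fin n → Q)

/-- Well-formedness of a contract automaton: every transition label is an action
(request, offer, or match), and components labelled □ stay idle. -/
def CAWF (C : LabelCtx L) (A : CA L Q n) : Prop :=
  ∀ t ∈ A.trans,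
    IsAction C (List.ofFn t.2.1) ∧
      ∀ i : Fin n, t.2.1 i = C.idle → t.1 i = t.2.2 i

/-- A run of a contract automaton from a state along a word ending in a state. -/
inductive CARun {L Q : Type} {n : ℕ} (A : CA L Q n) :
    (Fin n → Q) → List (Fin n → L) → (Fin n → Q) → Prop
  | nil (q : Fin n → Q) : CARun A q [] q
  | cons {q : Fin n → Q} {a : Fin n → L} {q' : Fin n → Q}
      {w : List (Fin n → L)} {q'' : Fin n → Q} :
      (q, a, q') ∈ A.trans → CARun A q' w q'' → CARun A q (a :: w) q''

/-- The language accepted by a contract automaton. -/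
def CALang (A : CA L Q n) : Set (List (Fin n → L)) :=
  { w | ∃ q, q ∈ A.acc ∧ CARun A A.init w q }

/-- A state is reachable from the initial state. -/
def CAReach (A : CA L Q n) (q : Fin n → Q) : Prop := ∃ w, CARun A A.init w q

def Deterministic (A : CA L Q n) : Prop :=
  ∀ q a q₁ q₂, (q, a, q₁) ∈ A.trans → (q, a, q₂) ∈ A.trans → q₁ = q₂

/-- A strong agreement: a finite non-empty word of match actions. -/
def StrongAgreement (C : LabelCtx L) (φ : List (Fin n → L)) : Prop :=
  φ ≠ [] ∧ ∀ a ∈ φ, IsMatch C (List.ofFn a)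

/-- A is strongly safe when its language consists of strong agreements only. -/
def StronglySafe (C : LabelCtx L) (A : CA L Q n) : Prop :=
  ∀ w ∈ CALang A, StrongAgreement C w

/-- K is a (strong) controller of A: a contract automaton with
L(K) ⊆ 𝔷 ∩ L(A). -/
def IsController (C : LabelCtx L) (A : CA L Q n) {Q' : Type} (K : CA L Q' n) : Prop :=
  CAWF C K ∧ ∀ w ∈ CALang K, StrongAgreement C w ∧ w ∈ CALang A

/-- K is a most permissive controller of A: a controller whose language contains
the language of every controller of A. -/
def IsMPC (C : LabelCtx L) (A : CA L Q n) {Q' : Type} (K : CA L Q' n) : Prop :=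
  IsController C A K ∧
    ∀ (Q'' : Type) (K' : CA L Q'' n), IsController C A K' → CALang K' ⊆ CALang K

/-- The sub-automaton 𝒦 of A consisting of the match transitions of A only. -/
def matchSub (C : LabelCtx L) (A : CA L Q n) : CA L Q n where
  init := A.init
  trans := { t | t ∈ A.trans ∧ IsMatch C (List.ofFn t.2.1) }
  acc := A.acc

/-- A state is redundant when no accepting state can be reached from it. -/
def Redundant (K : CA L Q n) (q : Fin n → Q) : Prop :=
  ¬ ∃ w qf, qf ∈ K.acc ∧ CARun K q w qf

/-- The concrete most permissive controller KS_A: the match transitions of A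
whose source and target are not redundant in 𝒦. -/
def mpc (C : LabelCtx L) (A : CA L Q n) : CA L Q n where
  init := A.init
  trans := { t | t ∈ (matchSub C A).trans ∧
      ¬ Redundant (matchSub C A) t.1 ∧ ¬ Redundant (matchSub C A) t.2.2 }
  acc := A.acc

/-! ### Communicating machines -/

/-- Actions of communicating machines: sends `(sr)!a` and receives `(sr)?a`;
`none` stands for the anonymous environment participant `−`. -/
inductive CAct (n : ℕ) (L : Type) : Type
  | send (s r : Option (Fin n)) (a : L) : CAct n L
  | recv (s r : Option (Fin n)) (a : L) : CAct n L

/-- `v` is a match action (as a rank-`n` tuple) on the request name `a`, with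
offer component `i` and request component `j`. -/
def MatchAt (C : LabelCtx L) (v : Fin n → L) (i j : Fin n) (a : L) : Prop :=
  i ≠ j ∧ a ∈ C.req ∧ v i = C.bar a ∧ v j = a ∧
    ∀ k : Fin n, k ≠ i → k ≠ j → v k = C.idle

/-- `v` is an offer action with offer component `i`, on the request name `a`. -/
def OfferAt (C : LabelCtx L) (v : Fin n → L) (i : Fin n) (a : L) : Prop :=
  a ∈ C.req ∧ v i = C.bar a ∧ ∀ k : Fin n, k ≠ i → v k = C.idle

/-- `v` is a request action with request component `j`, on the name `a`. -/
def RequestAt (C : LabelCtx L) (v : Fin n → L) (j : Fin n) (a : L) : Prop :=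
  a ∈ C.req ∧ v j = a ∧ ∀ k : Fin n, k ≠ j → v k = C.idle

/-- The CFSM transitions of participant `p` obtained by translating the contract
automaton `A` (Definition of the translation ⟦A⟧_p). -/
def cfsmTrans (C : LabelCtx L) (A : CA L Q n) (p : Fin n) :
    Set (Q × CAct n L × Q) :=
  { t | ∃ q v q', (q, v, q') ∈ A.trans ∧
      ((∃ i j a, MatchAt C v i j a ∧ p = i ∧
          t = (q i, CAct.send (some i) (some j) a, q' i)) ∨
       (∃ i j a, MatchAt C v i j a ∧ p = j ∧
          t = (q j, CAct.recv (some i) (some j) a, q' j)) ∨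
       (∃ i a, OfferAt C v i a ∧ p = i ∧
          t = (q i, CAct.send (some i) none a, q' i)) ∨
       (∃ j a, RequestAt C v j a ∧ p = j ∧
          t = (q j, CAct.recv none (some j) a, q' j))) }

/-- A configuration of a communicating system: local states and FIFO buffers. -/
structure Conf (n : ℕ) (Q L : Type) where
  st : Fin n → Q
  buf : Option (Fin n) × Option (Fin n) → List L

/-- The (unrestricted, unbounded-buffer) step relation of a communicating system
with transition relations `δ p` for each participant `p`. -/
inductive Step {L Q : Type} {n : ℕ} (δ : Fin n → Set (Q × CAct n L × Q)) :
    Conf n Q L → CAct n L → Conf n Q L → Prop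
  | send {c : Conf n Q L} {i : Fin n} {r : Option (Fin n)} {a : L} {q' : Q} :
      (c.st i, CAct.send (some i) r a, q') ∈ δ i →
      Step δ c (CAct.send (some i) r a)
        ⟨Function.update c.st i q',
          Function.update c.buf (some i, r) (c.buf (some i, r) ++ [a])⟩
  | recv {c : Conf n Q L} {s : Option (Fin n)} {j : Fin n} {a : L} {q' : Q}
      {rest : List L} :
      (c.st j, CAct.recv s (some j) a, q') ∈ δ j →
      c.buf (s, some j) = a :: rest →
      Step δ c (CAct.recv s (some j) a)
        ⟨Function.update c.st j q', Function.update c.buf (s, some j) rest⟩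

/-- Reachability in the unrestricted semantics. -/
def ReachU (δ : Fin n → Set (Q × CAct n L × Q)) : Conf n Q L → Conf n Q L → Prop :=
  Relation.ReflTransGen (fun c c' => ∃ ℓ, Step δ c ℓ c')

/-- All buffers are empty. -/
def Stable (c : Conf n Q L) : Prop := ∀ ch, c.buf ch = []

/-- The configuration is stable, or exactly one channel contains exactly one message. -/
def AtMostOne (c : Conf n Q L) : Prop :=
  Stable c ∨ ∃ ch a, c.buf ch = [a] ∧ ∀ ch', ch' ≠ ch → c.buf ch' = []

/-- Membership in RS≤1: reachable (from `c0`) and stable or with a single message. -/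
def RS1 (δ : Fin n → Set (Q × CAct n L × Q)) (c0 c : Conf n Q L) : Prop :=
  ReachU δ c0 c ∧ AtMostOne c

/-- The 1-buffer step relation ↠, relative to the initial configuration `c0`. -/
def Step1 (δ : Fin n → Set (Q × CAct n L × Q)) (c0 c : Conf n Q L)
    (ℓ : CAct n L) (c' : Conf n Q L) : Prop :=
  Step δ c ℓ c' ∧ RS1 δ c0 c ∧ RS1 δ c0 c'

/-- Firing a sequence of actions under the 1-buffer semantics. -/
inductive Steps1 {L Q : Type} {n : ℕ} (δ : Fin n → Set (Q × CAct n L × Q))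
    (c0 : Conf n Q L) : Conf n Q L → List (CAct n L) → Conf n Q L → Prop
  | nil (c : Conf n Q L) : Steps1 δ c0 c [] c
  | cons {c : Conf n Q L} {ℓ : CAct n L} {c' : Conf n Q L}
      {f : List (CAct n L)} {c'' : Conf n Q L} :
      Step1 δ c0 c ℓ c' → Steps1 δ c0 c' f c'' → Steps1 δ c0 c (ℓ :: f) c''

/-- Reachability under the 1-buffer semantics. -/
def Reach1 (δ : Fin n → Set (Q × CAct n L × Q)) (c0 c c' : Conf n Q L) : Prop :=
  ∃ f, Steps1 δ c0 c f c'

/-- The initial configuration of the communicating system obtained from `A`. -/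
def initConf (A : CA L Q n) : Conf n Q L := ⟨A.init, fun _ => []⟩

/-- Final configuration: stable with accepting (vector of) local states. -/
def FinalConf (Facc : Set (Fin n → Q)) (c : Conf n Q L) : Prop :=
  Stable c ∧ c.st ∈ Facc

/-- Deadlock under the 1-buffer semantics: not final and no outgoing ↠ step. -/
def Deadlock1 (δ : Fin n → Set (Q × CAct n L × Q)) (c0 : Conf n Q L)
    (Facc : Set (Fin n → Q)) (c : Conf n Q L) : Prop :=
  ¬ FinalConf Facc c ∧ ¬ ∃ ℓ c', Step1 δ c0 c ℓ c'

/-- Convergence under the 1-buffer semantics: from every reachable configuration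
a final configuration is reachable. -/
def Convergent1 (δ : Fin n → Set (Q × CAct n L × Q)) (c0 : Conf n Q L)
    (Facc : Set (Fin n → Q)) : Prop :=
  ∀ c, Reach1 δ c0 c0 c → ∃ c', Reach1 δ c0 c c' ∧ FinalConf Facc c'

/-- Convergence under the unrestricted (unbounded-buffer) semantics. -/
def ConvergentU (δ : Fin n → Set (Q × CAct n L × Q)) (c0 : Conf n Q L)
    (Facc : Set (Fin n → Q)) : Prop :=
  ∀ c, ReachU δ c0 c → ∃ c', ReachU δ c c' ∧ FinalConf Facc c'

/-- The translation ⟦φ⟧ of a word of contract-automaton actions into a trace of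
communicating-machine actions (a relation, since ⟦·⟧ is partial). -/
inductive SemWord {L : Type} {n : ℕ} (C : LabelCtx L) :
    List (Fin n → L) → List (CAct n L) → Prop
  | nil : SemWord C [] []
  | matchw {v : Fin n → L} {i j : Fin n} {a : L} {φ : List (Fin n → L)}
      {f : List (CAct n L)} :
      MatchAt C v i j a → SemWord C φ f →
      SemWord C (v :: φ)
        (CAct.send (some i) (some j) a :: CAct.recv (some i) (some j) a :: f)
  | offerw {v : Fin n → L} {i : Fin n} {a : L} {φ : List (Fin n → L)}
      {f : List (CAct n L)} :
      OfferAt C v i a → SemWord C φ f →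
      SemWord C (v :: φ) (CAct.send (some i) none a :: f)
  | requestw {v : Fin n → L} {j : Fin n} {a : L} {φ : List (Fin n → L)}
      {f : List (CAct n L)} :
      RequestAt C v j a → SemWord C φ f →
      SemWord C (v :: φ) (CAct.recv none (some j) a :: f)

/-- A liable transition of the controlled system KS_A/A: a transition of A, not
in the controller, whose source is reachable in the controller. -/
def Liable (C : LabelCtx L) (A : CA L Q n)
    (t : (Fin n → Q) × (Fin n → L) × (Fin n → Q)) : Prop :=
  t ∈ A.trans ∧ t ∉ (mpc C A).trans ∧ CAReach (mpc C A) t.1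

/-- The run of A from its initial state labelled φ traverses a liable transition. -/
def TraversesLiable (C : LabelCtx L) (A : CA L Q n) (φ : List (Fin n → L)) : Prop :=
  ∃ φ₁ v φ₂ q q', φ = φ₁ ++ v :: φ₂ ∧ CARun A A.init φ₁ q ∧
    Liable C A (q, v, q')

/-- The branching condition. -/
def Branching (C : LabelCtx L) (B : CA L Q n) : Prop :=
  ∀ q₁ q₂, CAReach B q₁ → CAReach B q₂ →
    ∀ (v : Fin n → L) (i j : Fin n) (a : L), MatchAt C v i j a →
      (∃ q', (q₁, v, q') ∈ B.trans) → q₁ i = q₂ i →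
      ∃ q'', (q₂, v, q'') ∈ B.trans

/-- A mixed-choice state: some participant has both an outgoing offer (p-th label
component in 𝕠) and an outgoing request (p-th label component in 𝕣). -/
def MixedChoiceState (C : LabelCtx L) (A : CA L Q n) (q : Fin n → Q) : Prop :=
  ∃ (p : Fin n) (v₁ : Fin n → L) (q₁ : Fin n → Q) (v₂ : Fin n → L) (q₂ : Fin n → Q),
    (q, v₁, q₁) ∈ A.trans ∧ (q, v₂, q₂) ∈ A.trans ∧ v₁ p ∈ C.off ∧ v₂ p ∈ C.req

/-- A principal: a rank-1 contract automaton no two of whose transitions have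
complementary (⋈) labels. -/
def IsPrincipal (C : LabelCtx L) (P : CA L Q 1) : Prop :=
  CAWF C P ∧ ∀ t₁ ∈ P.trans, ∀ t₂ ∈ P.trans,
    ¬ Bowtie C (List.ofFn t₁.2.1) (List.ofFn t₂.2.1)

/-- The idle tuple □ⁿ. -/
def idleVec (C : LabelCtx L) (m : ℕ) : Fin m → L := fun _ => C.idle

/-- The (binary) product of contract automata: synchronisation of ⋈-related
transitions; single components may move alone only when no synchronisation with
the other component is possible from the current state. -/
def prodCA (C : LabelCtx L) {m k : ℕ} (A : CA L Q m) (B : CA L Q k) :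
    CA L Q (m + k) where
  init := Fin.append A.init B.init
  acc := { q | ∃ qa qb, qa ∈ A.acc ∧ qb ∈ B.acc ∧ q = Fin.append qa qb }
  trans := { t |
    (∃ qa a qa' qb b qb', (qa, a, qa') ∈ A.trans ∧ (qb, b, qb') ∈ B.trans ∧
        Bowtie C (List.ofFn a) (List.ofFn b) ∧
        t = (Fin.append qa qb, Fin.append a b, Fin.append qa' qb')) ∨
    (∃ qa a qa' qb, (qa, a, qa') ∈ A.trans ∧
        (∀ b qb', (qb, b, qb') ∈ B.trans → ¬ Bowtie C (List.ofFn a) (List.ofFn b)) ∧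
        t = (Fin.append qa qb, Fin.append a (idleVec C k), Fin.append qa' qb)) ∨
    (∃ qb b qb' qa, (qb, b, qb') ∈ B.trans ∧
        (∀ a qa', (qa, a, qa') ∈ A.trans → ¬ Bowtie C (List.ofFn b) (List.ofFn a)) ∧
        t = (Fin.append qa qb, Fin.append (idleVec C m) b, Fin.append qa qb')) }

/-- Final configuration with per-participant accepting sets. -/
def FinalP {L Q : Type} {n : ℕ} (Facc : Fin n → Set Q) (c : Conf n Q L) : Prop :=
  Stable c ∧ ∀ p : Fin n, c.st p ∈ Facc p

/-!
A strong agreement `w ∈ L(A)` is the whole language of a linear automaton that reads `w` letter by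
letter. Such an automaton is itself a controller of `A`, so most permissiveness puts `w` into `L(K)`.
The only subtlety is well-formedness: a component labelled `□` must keep its state, so the state
reached after a prefix `u` records, for each component `i`, how many letters of `u` are busy at `i`.
Since every action is busy somewhere, these counts still separate the prefixes of `w`.
-/

section WordAutomaton

variable (C : LabelCtx L)

open Classical in
noncomputable def busyCount (u : List (Fin n → L)) (i : Fin n) : ℕ :=
  u.countP fun a => a i ≠ C.idle

lemma busyCount_append (u v : List (Fin n → L)) :
    busyCount C (u ++ v) = busyCount C u + busyCount C v := by
  funext i
  simp [busyCount, List.countP_append]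

lemma busyCount_singleton_of_eq_idle {a : Fin n → L} {i : Fin n} (h : a i = C.idle) :
    busyCount C [a] i = 0 := by
  simp [busyCount, h]

lemma eq_nil_of_busyCount_eq_zero {d : List (Fin n → L)} (hd : ∀ a ∈ d, ∃ i, a i ≠ C.idle)
    (h : busyCount C d = 0) : d = [] := by
  rcases d with _ | ⟨a, d⟩
  · rfl
  obtain ⟨i, hi⟩ := hd a List.mem_cons_self
  have hpos : 0 < busyCount C (a :: d) i :=
    List.countP_pos_iff.mpr ⟨a, List.mem_cons_self, by simpa using hi⟩
  simp [h] at hpos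

lemma busyCount_injOn_prefixes {w u u' : List (Fin n → L)} (hw : ∀ a ∈ w, ∃ i, a i ≠ C.idle)
    (hu : u <+: w) (hu' : u' <+: w) (h : busyCount C u = busyCount C u') : u = u' := by
  suffices key : ∀ {x y}, x <+: y → y <+: w → busyCount C x = busyCount C y → x = y by
    rcases List.prefix_or_prefix_of_prefix hu hu' with hle | hle
    · exact key hle hu' h
    · exact (key hle hu h.symm).symm
  rintro x _ ⟨d, rfl⟩ hyw hxy
  have hd : d = [] := by
    refine eq_nil_of_busyCount_eq_zero C (fun a ha => hw a (hyw.subset (by simp [ha]))) ?_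
    rw [busyCount_append] at hxy
    simpa using hxy.symm
  simp [hd]

noncomputable def wordCA (w : List (Fin n → L)) : CA L ℕ n where
  init := busyCount C []
  trans := { t | ∃ u a v, w = u ++ a :: v ∧ t = (busyCount C u, a, busyCount C (u ++ [a])) }
  acc := {busyCount C w}

lemma wordCA_run_suffix {w : List (Fin n → L)} :
    ∀ (v u : List (Fin n → L)), w = u ++ v → CARun (wordCA C w) (busyCount C u) v (busyCount C w)
  | [], u, hw => by simpa [hw] using CARun.nil _
  | a :: v, u, hw =>
    .cons ⟨u, a, v, hw, rfl⟩ (wordCA_run_suffix v (u ++ [a]) (by simpa using hw))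

lemma wordCA_run_prefix {w u f : List (Fin n → L)} (hw : ∀ a ∈ w, ∃ i, a i ≠ C.idle)
    {q₀ q : Fin n → ℕ} (hr : CARun (wordCA C w) q₀ f q) (hu : u <+: w)
    (hq₀ : q₀ = busyCount C u) : u ++ f <+: w ∧ q = busyCount C (u ++ f) := by
  induction hr generalizing u with
  | nil => simpa using ⟨hu, hq₀⟩
  | @cons _ a _ _ _ ht _ ih =>
    obtain ⟨u₁, _, v, hw₁, ht⟩ := ht
    simp only [Prod.mk.injEq] at ht
    obtain ⟨rfl, rfl, rfl⟩ := ht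
    obtain rfl : u = u₁ := busyCount_injOn_prefixes C hw hu ⟨a :: v, hw₁.symm⟩ hq₀.symm
    simpa using ih ⟨v, by simp [hw₁]⟩ rfl

lemma mem_lang_wordCA_self (w : List (Fin n → L)) : w ∈ CALang (wordCA C w) :=
  ⟨_, rfl, wordCA_run_suffix C w [] rfl⟩

lemma eq_of_mem_lang_wordCA {w f : List (Fin n → L)} (hw : ∀ a ∈ w, ∃ i, a i ≠ C.idle)
    (hf : f ∈ CALang (wordCA C w)) : f = w := by
  obtain ⟨q, rfl, hr⟩ := hf
  obtain ⟨hfw, hq⟩ := wordCA_run_prefix C hw hr List.nil_prefix rfl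
  exact busyCount_injOn_prefixes C hw hfw List.prefix_rfl (by simpa using hq.symm)

lemma cawf_wordCA {w : List (Fin n → L)} (hw : ∀ a ∈ w, IsAction C (List.ofFn a)) :
    CAWF C (wordCA C w) := by
  rintro _ ⟨u, a, v, rfl, rfl⟩
  refine ⟨hw a (by simp), fun i hi => ?_⟩
  simp [busyCount_append, busyCount_singleton_of_eq_idle C hi]

end WordAutomaton

lemma IsAction.exists_ne_idle {C : LabelCtx L} {a : Fin n → L} (h : IsAction C (List.ofFn a)) :
    ∃ i, a i ≠ C.idle := by
  obtain ⟨b, hb, hmem⟩ : ∃ b ∈ C.req ∪ C.off, b ∈ List.ofFn a := by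
    obtain ⟨b, ⟨hb, u, v, -, -, he⟩ | ⟨hb, u, v, -, -, he⟩ | ⟨hb, u, v, z, -, -, -, he⟩⟩ := h
    <;> exact ⟨b, by simp [hb], by simp [he]⟩
  obtain ⟨i, rfl⟩ := List.mem_ofFn.mp hmem
  refine ⟨i, fun hi => ?_⟩
  rcases hb with hb | hb
  · exact C.idle_not_req (hi ▸ hb)
  · exact C.idle_not_off (hi ▸ hb)

lemma StrongAgreement.forall_isAction {C : LabelCtx L} {w : List (Fin n → L)}
    (h : StrongAgreement C w) : ∀ a ∈ w, IsAction C (List.ofFn a) := fun a ha =>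
  let ⟨b, hb⟩ := h.2 a ha
  ⟨b, .inr (.inr hb)⟩

lemma isController_wordCA {C : LabelCtx L} {A : CA L Q n} {w : List (Fin n → L)}
    (hs : StrongAgreement C w) (hw : w ∈ CALang A) : IsController C A (wordCA C w) := by
  refine ⟨cawf_wordCA C hs.forall_isAction, fun f hf => ?_⟩
  obtain rfl := eq_of_mem_lang_wordCA C (fun a ha => (hs.forall_isAction a ha).exists_ne_idle) hf
  exact ⟨hs, hw⟩

theorem mpc_lang_eq_general {L Q Q' : Type} {n : ℕ}
    (C : LabelCtx L) (A : CA L Q n)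
    (K : CA L Q' n) (h : IsMPC C A K) :
    CALang K = { w | StrongAgreement C w ∧ w ∈ CALang A } := by
  ext w
  exact ⟨h.1.2 w, fun ⟨hs, hw⟩ =>
    h.2 ℕ (wordCA C w) (isController_wordCA hs hw) (mem_lang_wordCA_self C w)⟩

/-- if KS_A is the most permissive controller of A then
L(KS_A) = 𝔷 ∩ L(A). -/
theorem mpc_lang_eq {L Q Q' : Type} {n : ℕ}
    (C : LabelCtx L) (A : CA L Q n) (hA : CAWF C A)
    (K : CA L Q' n) (h : IsMPC C A K) :
    CALang K = { w | StrongAgreement C w ∧ w ∈ CALang A } :=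
  mpc_lang_eq_general C A K h

end CAut
end

section
/- Let 𝒦 be the sub-automaton of a contract automaton A consisting of exactly the match transitions of A, and let KS_A be the automaton obtained from 𝒦 by deleting every transition whose source or target state is redundant in 𝒦 (a state is redundant iff no accepting state is reachable from it). Then a contract automaton is the most permissive controller of A if, and only if, it is language-equivalent to KS_A. -/
namespace CAut

variable {L Q : Type} {n : ℕ}

/-! An accepting run of `A` whose labels are all matches stays inside 𝒦, and every state
it visits can still reach its accepting end, so it is not redundant: the run is a run of
KS_A. Conversely KS_A is a sub-automaton of `A` with match labels only, and `ε` is not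
accepted since the initial state is not accepting. Hence L(KS_A) = 𝔷 ∩ L(A), the largest
language a controller can have, and most permissive controllers are exactly the
automata with that language. -/

theorem CARun.mono {A B : CA L Q n} (h : A.trans ⊆ B.trans)
    {q : Fin n → Q} {w : List (Fin n → L)} {q' : Fin n → Q}
    (hr : CARun A q w q') : CARun B q w q' := by
  induction hr with
  | nil q => exact .nil q
  | cons ht _ ih => exact .cons (h ht) ih

theorem mpc_trans_subset (C : LabelCtx L) (A : CA L Q n) : (mpc C A).trans ⊆ A.trans :=
  fun _ ht => ht.1.1

theorem CARun.matchSub_of_isMatch {C : LabelCtx L} {A : CA L Q n}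
    {q : Fin n → Q} {w : List (Fin n → L)} {qf : Fin n → Q}
    (hr : CARun A q w qf) (hm : ∀ a ∈ w, IsMatch C (List.ofFn a)) :
    CARun (matchSub C A) q w qf := by
  induction hr with
  | nil q => exact .nil q
  | cons ht _ ih =>
    exact .cons ⟨ht, hm _ List.mem_cons_self⟩ (ih fun a ha => hm a (List.mem_cons_of_mem _ ha))

theorem CARun.mpc_of_matchSub {C : LabelCtx L} {A : CA L Q n}
    {q : Fin n → Q} {w : List (Fin n → L)} {qf : Fin n → Q}
    (hr : CARun (matchSub C A) q w qf) (hf : qf ∈ A.acc) :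
    CARun (mpc C A) q w qf := by
  induction hr with
  | nil q => exact .nil q
  | @cons _ a _ w _ ht hr ih =>
    exact .cons ⟨ht, fun hred => hred ⟨a :: w, _, hf, .cons ht hr⟩,
      fun hred => hred ⟨w, _, hf, hr⟩⟩ (ih hf)

theorem CARun.isMatch_of_mpc {C : LabelCtx L} {A : CA L Q n}
    {q : Fin n → Q} {w : List (Fin n → L)} {qf : Fin n → Q}
    (hr : CARun (mpc C A) q w qf) : ∀ a ∈ w, IsMatch C (List.ofFn a) := by
  induction hr with
  | nil q => simp
  | cons ht _ ih =>
    rintro b (_ | ⟨_, hb⟩)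
    · exact ht.1.2
    · exact ih b hb

theorem mpc_isController {C : LabelCtx L} {A : CA L Q n}
    (hA : CAWF C A) (hinit : A.init ∉ A.acc) : IsController C A (mpc C A) := by
  refine ⟨fun t ht => hA t ht.1.1, ?_⟩
  rintro w ⟨q, hq, hr⟩
  have hne : w ≠ [] := by
    rintro rfl
    cases hr
    exact hinit hq
  exact ⟨⟨hne, hr.isMatch_of_mpc⟩, q, hq, hr.mono (mpc_trans_subset C A)⟩

theorem mpc_isMPC {C : LabelCtx L} {A : CA L Q n}
    (hA : CAWF C A) (hinit : A.init ∉ A.acc) : IsMPC C A (mpc C A) := by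
  refine ⟨mpc_isController hA hinit, ?_⟩
  rintro Q'' K' ⟨-, hK⟩ w hw
  obtain ⟨⟨-, hmatch⟩, q, hq, hr⟩ := hK w hw
  exact ⟨q, hq, (hr.matchSub_of_isMatch hmatch).mpc_of_matchSub hq⟩

theorem IsMPC.isMPC_iff_lang_eq {C : LabelCtx L} {A : CA L Q n} {Q' Q'' : Type}
    {K : CA L Q' n} (hK : IsMPC C A K) {B : CA L Q'' n} (hB : CAWF C B) :
    IsMPC C A B ↔ CALang B = CALang K := by
  constructor
  · rintro ⟨hBc, hBm⟩
    exact (hK.2 _ B hBc).antisymm (hBm _ K hK.1)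
  · intro h
    exact ⟨⟨hB, fun w hw => hK.1.2 w (h ▸ hw)⟩, fun Q₀ K₀ hK₀ => h ▸ hK.2 Q₀ K₀ hK₀⟩

theorem mpc_characterisation_general {L Q Q' : Type} {n : ℕ}
    (C : LabelCtx L) (A : CA L Q n)
    (hA : CAWF C A) (hinit : A.init ∉ A.acc)
    (B : CA L Q' n) (hB : CAWF C B) :
    IsMPC C A B ↔ CALang B = CALang (mpc C A) :=
  (mpc_isMPC hA hinit).isMPC_iff_lang_eq hB

/-- a contract automaton is the most permissive controller of A
iff it is language-equivalent to the automaton KS_A obtained from the match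
sub-automaton 𝒦 of A by deleting all transitions with a redundant endpoint. -/
theorem mpc_characterisation {L Q Q' : Type} {n : ℕ}
    (C : LabelCtx L) (A : CA L Q n)
    (hA : CAWF C A) (hdet : Deterministic A) (hinit : A.init ∉ A.acc)
    (B : CA L Q' n) (hB : CAWF C B) :
    IsMPC C A B ↔ CALang B = CALang (mpc C A) :=
  mpc_characterisation_general C A hA hinit B hB

end CAut
end

section
/- Let A be a contract automaton with most permissive controller KS_A, and let s₁ and s₂ be the initial configurations of KS_A and of the communicating system S(KS_A), respectively. If s₁ can perform the sequence of actions φ in KS_A, then s₂ can perform ⟦φ⟧ under the 1-buffer semantics of S(KS_A). -/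
namespace CAut

variable {L Q : Type} {n : ℕ}

/-! KS_A has only match transitions, and a match of `i` and `j` on `a` is simulated from a
stable configuration by `(ij)!a` followed by `(ij)?a`: in between, that single message is
the only one in transit, and afterwards the system is stable again with local states equal
to the target state of the controller, because the idle participants do not move in a
well-formed automaton. Induction along the run of KS_A finishes the proof. -/

lemma LabelCtx.ne_idle_of_mem (C : LabelCtx L) {a : L} (ha : a ∈ C.req ∪ C.off) :
    a ≠ C.idle := by
  rintro rfl
  exact ha.elim C.idle_not_req C.idle_not_off

lemma LabelCtx.bar_mem (C : LabelCtx L) {a : L} (ha : a ∈ C.req ∪ C.off) :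
    C.bar a ∈ C.req ∪ C.off :=
  ha.elim (fun h => Or.inr (C.bar_req a h)) (fun h => Or.inl (C.bar_off a h))

lemma IsMatch.exists_ne_of_ne_idle {C : LabelCtx L} {v : Fin n → L}
    (h : IsMatch C (List.ofFn v)) :
    ∃ k₁ k₂ : Fin n, k₁ ≠ k₂ ∧ v k₁ ≠ C.idle ∧ v k₂ ≠ C.idle := by
  obtain ⟨b, hb, u, w, z, -, -, -, heq⟩ := h
  have hlen : n = u.length + w.length + z.length + 2 := by
    simpa [Nat.add_assoc, Nat.add_comm, Nat.add_left_comm] using congrArg List.length heq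
  have hv : ∀ k (hk : k < n), v ⟨k, hk⟩ = (u ++ b :: (w ++ C.bar b :: z))[k]'(by
      simp; omega) := fun k hk => by simp [← heq]
  refine ⟨⟨u.length, by omega⟩, ⟨u.length + (w.length + 1), by omega⟩, by simp [Fin.ext_iff],
    ?_, ?_⟩
  · rw [hv]
    simpa using C.ne_idle_of_mem hb
  · rw [hv, List.getElem_append_right (by omega)]
    simpa using C.ne_idle_of_mem (C.bar_mem hb)

lemma IsMatch.not_forall_ne_eq_idle {C : LabelCtx L} {v : Fin n → L}
    (h : IsMatch C (List.ofFn v)) (i : Fin n) : ¬ ∀ k, k ≠ i → v k = C.idle := fun hi => by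
  obtain ⟨k₁, k₂, hne, h₁, h₂⟩ := h.exists_ne_of_ne_idle
  exact hne ((not_imp_comm.1 (hi k₁) h₁).trans (not_imp_comm.1 (hi k₂) h₂).symm)

lemma CAWF.mpc {C : LabelCtx L} {A : CA L Q n} (hA : CAWF C A) : CAWF C (mpc C A) :=
  fun t ht => hA t ht.1.1

lemma MatchAt.update_update_eq {C : LabelCtx L} {v : Fin n → L} {i j : Fin n} {a : L}
    (hv : MatchAt C v i j a) {q q' : Fin n → Q} (hidle : ∀ k, v k = C.idle → q k = q' k) :
    Function.update (Function.update q i (q' i)) j (q' j) = q' := by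
  funext k
  by_cases hkj : k = j
  · subst hkj; simp
  by_cases hki : k = i
  · subst hki; simp [hkj]
  simp [hkj, hki, hidle k (hv.2.2.2.2 k hki hkj)]

section Lifting

variable {δ : Fin n → Set (Q × CAct n L × Q)} {c0 c c' : Conf n Q L} {ℓ : CAct n L}

def stableConf (q : Fin n → Q) : Conf n Q L := ⟨q, fun _ => []⟩

/-- Participant `i` has sent `a` to `j` from the stable configuration `q` and moved to `p`. -/
def sentConf (q : Fin n → Q) (i j : Fin n) (p : Q) (a : L) : Conf n Q L :=
  ⟨Function.update q i p, Function.update (fun _ => []) (some i, some j) [a]⟩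

lemma atMostOne_stableConf (q : Fin n → Q) : AtMostOne (stableConf (L := L) q) :=
  Or.inl fun _ => rfl

lemma atMostOne_sentConf (q : Fin n → Q) (i j : Fin n) (p : Q) (a : L) :
    AtMostOne (sentConf q i j p a) :=
  Or.inr ⟨(some i, some j), a, by simp [sentConf], fun ch hch => by simp [sentConf, hch]⟩

lemma Step1.of_step (hc : RS1 δ c0 c) (hstep : Step δ c ℓ c') (hc' : AtMostOne c') :
    Step1 δ c0 c ℓ c' :=
  ⟨hstep, hc, hc.1.tail ⟨ℓ, hstep⟩, hc'⟩

lemma step_send_stableConf {q : Fin n → Q} {i j : Fin n} {p : Q} {a : L}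
    (h : (q i, CAct.send (some i) (some j) a, p) ∈ δ i) :
    Step δ (stableConf q) (CAct.send (some i) (some j) a) (sentConf q i j p a) :=
  Step.send h

lemma step_recv_sentConf {q : Fin n → Q} {i j : Fin n} (hij : i ≠ j) {p p' : Q} {a : L}
    (h : (q j, CAct.recv (some i) (some j) a, p') ∈ δ j) :
    Step δ (sentConf q i j p a) (CAct.recv (some i) (some j) a)
      (stableConf (Function.update (Function.update q i p) j p')) := by
  have hj : (sentConf q i j p a).st j = q j := Function.update_of_ne hij.symm _ _
  have hstep := Step.recv (δ := δ) (rest := []) (hj ▸ h) (by simp [sentConf])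
  simpa [sentConf, stableConf] using hstep

lemma steps1_of_run {C : LabelCtx L} {K : CA L Q n} (hK : CAWF C K)
    (hmatch : ∀ t ∈ K.trans, IsMatch C (List.ofFn t.2.1)) {c0 : Conf n Q L}
    {φ : List (Fin n → L)} {f : List (CAct n L)} (hsem : SemWord C φ f) {q q' : Fin n → Q}
    (hrun : CARun K q φ q') (hreach : ReachU (cfsmTrans C K) c0 (stableConf q)) :
    Steps1 (cfsmTrans C K) c0 (stableConf q) f (stableConf q') := by
  induction hsem generalizing q with
  | nil =>
    cases hrun
    exact Steps1.nil _
  | @matchw v i j a φ f hv _ ih =>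
    obtain _ | @⟨_, _, q₀, _, _, ht, hrun⟩ := hrun
    have hsend : Step1 (cfsmTrans C K) c0 (stableConf q) (CAct.send (some i) (some j) a)
        (sentConf q i j (q₀ i) a) :=
      .of_step ⟨hreach, atMostOne_stableConf q⟩
        (step_send_stableConf ⟨q, v, q₀, ht, .inl ⟨i, j, a, hv, rfl, rfl⟩⟩)
        (atMostOne_sentConf q i j (q₀ i) a)
    have hrecv : Step1 (cfsmTrans C K) c0 (sentConf q i j (q₀ i) a)
        (CAct.recv (some i) (some j) a) (stableConf q₀) := by
      have hstep := step_recv_sentConf (δ := cfsmTrans C K) hv.1 (p := q₀ i) (p' := q₀ j)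
        ⟨q, v, q₀, ht, .inr (.inl ⟨i, j, a, hv, rfl, rfl⟩)⟩
      rw [hv.update_update_eq (hK _ ht).2] at hstep
      exact .of_step hsend.2.2 hstep (atMostOne_stableConf q₀)
    exact .cons hsend (.cons hrecv (ih hrun hrecv.2.2.1))
  | @offerw v i a _ _ hv =>
    obtain _ | ⟨ht, -⟩ := hrun
    exact absurd hv.2.2 ((hmatch _ ht).not_forall_ne_eq_idle i)
  | @requestw v j a _ _ hv =>
    obtain _ | ⟨ht, -⟩ := hrun
    exact absurd hv.2.2 ((hmatch _ ht).not_forall_ne_eq_idle j)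

end Lifting

theorem controller_moves_lift_to_system_general {L Q : Type} {n : ℕ}
    (C : LabelCtx L) (A : CA L Q n) (hA : CAWF C A) :
    ∀ (φ : List (Fin n → L)) (q' : Fin n → Q),
      CARun (mpc C A) (mpc C A).init φ q' →
      ∀ f : List (CAct n L), SemWord C φ f →
        ∃ c', Steps1 (cfsmTrans C (mpc C A)) (initConf (mpc C A))
                (initConf (mpc C A)) f c' :=
  fun _ q' hrun _ hsem =>
    ⟨stableConf q', steps1_of_run hA.mpc (fun _ ht => ht.1.2) hsem hrun .refl⟩

/-- Theorem 1.1: if the controller KS_A can perform φ, then the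
communicating system S(KS_A) can perform ⟦φ⟧ under the 1-buffer semantics. -/
theorem controller_moves_lift_to_system {L Q : Type} {n : ℕ}
    (C : LabelCtx L) (A : CA L Q n) (hA : CAWF C A) (hdet : Deterministic A) :
    ∀ (φ : List (Fin n → L)) (q' : Fin n → Q),
      CARun (mpc C A) (mpc C A).init φ q' →
      ∀ f : List (CAct n L), SemWord C φ f →
        ∃ c', Steps1 (cfsmTrans C (mpc C A)) (initConf (mpc C A))
                (initConf (mpc C A)) f c' :=
  controller_moves_lift_to_system_general C A hA

end CAut
end
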